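/- arXiv:2605.13463 — 3 statements merged into one kernel-verified Lean document; each statement's English description precedes it below -/
import Mathlib

section
/- Let a = (a₁, a₂, a₃) ∈ ℝ³ with a₁ ≠ 0, a₂ ≠ 0, a₃ ≠ 0, and let g₁, g₂, g₃ : ℝ³ → ℝ be C¹ functions satisfying, for each j, the conditions a₁∂₁gⱼ + a₂∂₂gⱼ + a₃∂₃gⱼ = 0 and x₁∂₁gⱼ + x₂∂₂gⱼ + x₃∂₃gⱼ = 2gⱼ. Define eⱼ(x) = −xⱼ²/aⱼ + gⱼ(x) and the vector fields E = Σⱼ eⱼ∂ⱼ, H = 2(x₁∂₁ + x₂∂₂ + x₃∂₃), F = a₁∂₁ + a₂∂₂ + a₃∂₃. Then E, H, F satisfy the sl(2,ℝ) commutation relations [H, E] = 2E, [H, F] = −2F, [E, F] = H. -/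
/-!
Each bracket unwinds to derivatives of constants, of the linear coordinates and of the
quadratics −xᵢ²/aᵢ, plus two derivatives of gᵢ supplied by the hypotheses: Euler's identity
H(gᵢ) = 2gᵢ gives [H, E] = 2E, and F(gᵢ) = 0 together with F(−xᵢ²/aᵢ) = −2xᵢ gives [E, F] = H.
-/

/-- Partial derivative ∂ᵢf at x of a function on ℝⁿ (modeled as `Fin n → ℝ`). -/
noncomputable def pd {n : ℕ} (f : (Fin n → ℝ) → ℝ) (i : Fin n) (x : Fin n → ℝ) : ℝ :=
  fderiv ℝ f x (Pi.single i 1)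

/-- Directional derivative Z(f) = Σⱼ Zⱼ ∂ⱼf of f along the vector field Z. -/
noncomputable def lieD {n : ℕ} (Z : Fin n → (Fin n → ℝ) → ℝ) (f : (Fin n → ℝ) → ℝ)
    (x : Fin n → ℝ) : ℝ :=
  ∑ j, Z j x * pd f j x

section PartialDerivative

variable {n : ℕ} {f g : (Fin n → ℝ) → ℝ} {x : Fin n → ℝ}

lemma pd_eq_of_hasFDerivAt {f' : (Fin n → ℝ) →L[ℝ] ℝ} (h : HasFDerivAt f f' x) (j : Fin n) :
    pd f j x = f' (Pi.single j 1) := by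
  rw [pd, h.fderiv]

lemma pd_const (c : ℝ) (j : Fin n) : pd (fun _ => c) j x = 0 := by
  simp [pd]

lemma pd_add (hf : DifferentiableAt ℝ f x) (hg : DifferentiableAt ℝ g x) (j : Fin n) :
    pd (fun y => f y + g y) j x = pd f j x + pd g j x :=
  pd_eq_of_hasFDerivAt (hf.hasFDerivAt.add hg.hasFDerivAt) j

lemma pd_const_mul_coord (c : ℝ) (k j : Fin n) :
    pd (fun y => c * y k) j x = if k = j then c else 0 := by
  rw [pd_eq_of_hasFDerivAt ((hasFDerivAt_apply k x).const_mul c)]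
  simp [Pi.single_apply]

lemma pd_neg_sq_div_coord (c : ℝ) (k j : Fin n) :
    pd (fun y => -(y k) ^ 2 / c) j x = if k = j then -2 * x k / c else 0 := by
  have h := ((hasFDerivAt_apply (𝕜 := ℝ) k x).pow 2).const_mul (-c⁻¹)
  rw [show (fun y : Fin n → ℝ => -(y k) ^ 2 / c) = fun y => -c⁻¹ * y k ^ 2 by
    funext y; ring, pd_eq_of_hasFDerivAt h]
  by_cases hkj : k = j <;> simp [hkj]
  ring

end PartialDerivative

section DirectionalDerivative

variable {n : ℕ} {g : (Fin n → ℝ) → ℝ} {x : Fin n → ℝ} (Z : Fin n → (Fin n → ℝ) → ℝ)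

lemma lieD_const (c : ℝ) : lieD Z (fun _ => c) x = 0 := by
  simp [lieD, pd_const]

lemma lieD_const_mul_coord (c : ℝ) (k : Fin n) : lieD Z (fun y => c * y k) x = c * Z k x := by
  simp [lieD, pd_const_mul_coord, mul_comm]

lemma lieD_neg_sq_div_coord_add (hg : DifferentiableAt ℝ g x) (c : ℝ) (k : Fin n) :
    lieD Z (fun y => -(y k) ^ 2 / c + g y) x = -2 * x k * Z k x / c + lieD Z g x := by
  have hsq : DifferentiableAt ℝ (fun y : Fin n → ℝ => -(y k) ^ 2 / c) x := by fun_prop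
  simp only [lieD, pd_add hsq hg, pd_neg_sq_div_coord, mul_add, Finset.sum_add_distrib,
    mul_ite, mul_zero, Finset.sum_ite_eq, Finset.mem_univ, if_true]
  ring

lemma lieD_const_mul_field (c : ℝ) (f : (Fin n → ℝ) → ℝ) :
    lieD (fun j y => c * Z j y) f x = c * lieD Z f x := by
  simp [lieD, Finset.mul_sum, mul_assoc]

end DirectionalDerivative

/-- With eⱼ = −xⱼ²/aⱼ + gⱼ, where F(gⱼ) = 0 and H(gⱼ) = 2gⱼ (degree-two homogeneity),
the fields E = Σeⱼ∂ⱼ, H = 2Σxⱼ∂ⱼ, F = Σaⱼ∂ⱼ satisfy the sl(2,ℝ) relations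
[H,E] = 2E, [H,F] = −2F, [E,F] = H, with [X,Y]ᵢ = X(Yᵢ) − Y(Xᵢ). -/
theorem sl2_realisation_R3 (a : Fin 3 → ℝ) (ha : ∀ j, a j ≠ 0)
    (g : Fin 3 → (Fin 3 → ℝ) → ℝ) (hg : ∀ j, ContDiff ℝ 1 (g j))
    (hgF : ∀ j (x : Fin 3 → ℝ), ∑ i, a i * pd (g j) i x = 0)
    (hgH : ∀ j (x : Fin 3 → ℝ), ∑ i, x i * pd (g j) i x = 2 * g j x) :
    ∀ (i : Fin 3) (x : Fin 3 → ℝ),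
      (lieD (fun j y => 2 * y j) (fun y => -(y i) ^ 2 / a i + g i y) x -
          lieD (fun j y => -(y j) ^ 2 / a j + g j y) (fun y => 2 * y i) x =
        2 * (-(x i) ^ 2 / a i + g i x)) ∧
      (lieD (fun j y => 2 * y j) (fun _ => a i) x -
          lieD (fun j _ => a j) (fun y => 2 * y i) x = -2 * a i) ∧
      (lieD (fun j y => -(y j) ^ 2 / a j + g j y) (fun _ => a i) x -
          lieD (fun j _ => a j) (fun y => -(y i) ^ 2 / a i + g i y) x = 2 * x i) := by
  intro i x
  have hgi : DifferentiableAt ℝ (g i) x := (hg i).differentiable one_ne_zero x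
  have hEuler : lieD (fun j y => 2 * y j) (g i) x = 4 * g i x := by
    rw [lieD_const_mul_field (fun j y => y j), lieD, hgH]; ring
  have hF : lieD (fun j _ => a j) (g i) x = 0 := hgF i x
  refine ⟨?_, ?_, ?_⟩
  · rw [lieD_neg_sq_div_coord_add _ hgi, lieD_const_mul_coord, hEuler]
    ring
  · rw [lieD_const, lieD_const_mul_coord]
    ring
  · rw [lieD_const, lieD_neg_sq_div_coord_add _ hgi, hF]
    field_simp [ha i]
    ring
end

section
/- Let U = {(x₁,x₂,x₃) ∈ ℝ³ : x₂ > x₁ > x₃}, and for x ∈ U set z(x) = √((x₁ − x₃)/(x₂ − x₃)) ∈ (0,1) and z'(x) = √(1 − z(x)²). Define K(k) = ∫₀^{π/2} (1 − k²sin²θ)^{−1/2} dθ and Eℓ(k) = ∫₀^{π/2} (1 − k²sin²θ)^{1/2} dθ, and the function f₂(x) = (x₃/√(x₂ − x₃))·K(z'(x)) + √(x₂ − x₃)·Eℓ(z'(x)). Then f₂ is differentiable on U and is a first integral of the Darboux–Halphen vector field X, i.e. X(f₂) = 0 at every point of U. -/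
open Real in
/-- Complete elliptic integral of the first kind K(k). -/
noncomputable def Kell (k : ℝ) : ℝ :=
  ∫ θ in (0:ℝ)..(π / 2), 1 / Real.sqrt (1 - k ^ 2 * Real.sin θ ^ 2)

open Real in
/-- Complete elliptic integral of the second kind E(k). -/
noncomputable def Eell (k : ℝ) : ℝ :=
  ∫ θ in (0:ℝ)..(π / 2), Real.sqrt (1 - k ^ 2 * Real.sin θ ^ 2)

/-- The Darboux–Halphen vector field on ℝ³ (0-indexed coordinates). -/
noncomputable def DH : Fin 3 → (Fin 3 → ℝ) → ℝ :=
  ![fun x => x 1 * x 2 - x 0 * (x 1 + x 2),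
    fun x => x 0 * x 2 - x 1 * (x 0 + x 2),
    fun x => x 0 * x 1 - x 2 * (x 0 + x 1)]

/-- z(x) = √((x₁−x₃)/(x₂−x₃)). -/
noncomputable def zDH : (Fin 3 → ℝ) → ℝ := fun x =>
  Real.sqrt ((x 0 - x 2) / (x 1 - x 2))

/-- f₂ = x₃/√(x₂−x₃)·K(z′) + √(x₂−x₃)·E(z′), where z′ = √(1 − z²). -/
noncomputable def f2DH : (Fin 3 → ℝ) → ℝ := fun x =>
  x 2 / Real.sqrt (x 1 - x 2) * Kell (Real.sqrt (1 - zDH x ^ 2)) +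
    Real.sqrt (x 1 - x 2) * Eell (Real.sqrt (1 - zDH x ^ 2))

/-! In the paper's indexing, put `Q(θ, x) = (x₁ - x₃) sin²θ + (x₂ - x₃) cos²θ`. On `U` one has
`1 - z'² sin²θ = Q / (x₂ - x₃)`, so `f₂ = ∫₀^{π/2} (x₃ / √Q + √Q) dθ`. The integrand is `C¹` in `x`,
jointly continuously in `(x, θ)`, so `f₂` may be differentiated under the integral sign over the
compact range of `θ`. Applying `X` to the integrand gives an exact `θ`-derivative,
`X(x₃ / √Q + √Q) = ∂_θ h` with `h = x₃ (x₁ - x₂) sin θ cos θ / √Q`, and `h` vanishes at `0` and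
at `π/2`; hence `X(f₂) = 0`. -/

open Real Set intervalIntegral
open scoped Interval Topology

theorem hasFDerivAt_intervalIntegral_of_continuousOn {H E : Type*} [NormedAddCommGroup H]
    [NormedSpace ℝ H] [ProperSpace H] [NormedAddCommGroup E] [NormedSpace ℝ E]
    {F : H → ℝ → E} {F' : H → ℝ → H →L[ℝ] E} {s : Set H} {x₀ : H} {a b : ℝ}
    (hs : s ∈ 𝓝 x₀) (hF : ContinuousOn (Function.uncurry F) (s ×ˢ [[a, b]]))
    (hF' : ContinuousOn (Function.uncurry F') (s ×ˢ [[a, b]]))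
    (hdiff : ∀ y ∈ s, ∀ t ∈ [[a, b]], HasFDerivAt (F · t) (F' y t) y) :
    HasFDerivAt (fun y => ∫ t in a..b, F y t) (∫ t in a..b, F' x₀ t) x₀ := by
  obtain ⟨r, hr, hrs⟩ := Metric.nhds_basis_closedBall.mem_iff.1 hs
  have hball : Metric.ball x₀ r ⊆ s := Metric.ball_subset_closedBall.trans hrs
  obtain ⟨C, hC⟩ := ((isCompact_closedBall x₀ r).prod isCompact_uIcc).exists_bound_of_continuousOn
    (hF'.mono (prod_mono hrs subset_rfl))
  have hx₀ := mem_of_mem_nhds hs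
  refine hasFDerivAt_integral_of_dominated_of_fderiv_le (bound := fun _ => C)
    (Metric.ball_mem_nhds x₀ hr) ?_ ((hF.uncurry_left x₀ hx₀).intervalIntegrable)
    (((hF'.uncurry_left x₀ hx₀).mono uIoc_subset_uIcc).aestronglyMeasurable measurableSet_uIoc)
    (Filter.Eventually.of_forall fun t ht y hy =>
      hC (y, t) ⟨Metric.ball_subset_closedBall hy, uIoc_subset_uIcc ht⟩)
    intervalIntegrable_const
    (Filter.Eventually.of_forall fun t ht y hy => hdiff y (hball hy) t (uIoc_subset_uIcc ht))
  filter_upwards [hs] with y hy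
  exact ((hF.uncurry_left y hy).mono uIoc_subset_uIcc).aestronglyMeasurable measurableSet_uIoc

theorem lieD_eq_fderiv_apply {n : ℕ} (Z : Fin n → (Fin n → ℝ) → ℝ) (f : (Fin n → ℝ) → ℝ)
    (x : Fin n → ℝ) : lieD Z f x = fderiv ℝ f x (fun j => Z j x) := by
  conv_rhs => rw [← Finset.univ_sum_single (fun j => Z j x)]
  simp only [lieD, pd, map_sum]
  congr 1 with j
  rw [← smul_eq_mul, ← map_smul, ← Pi.single_smul', smul_eq_mul, mul_one]

namespace DarbouxHalphen

noncomputable def Q (θ : ℝ) : (Fin 3 → ℝ) →L[ℝ] ℝ :=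
  sin θ ^ 2 • (.proj 0 - .proj 2) + cos θ ^ 2 • (.proj 1 - .proj 2)

@[simp] lemma Q_apply (θ : ℝ) (y : Fin 3 → ℝ) :
    Q θ y = (y 0 - y 2) * sin θ ^ 2 + (y 1 - y 2) * cos θ ^ 2 := by
  simp [Q, mul_comm]

@[fun_prop] lemma continuous_Q : Continuous Q := by
  unfold Q; fun_prop

lemma Q_pos {y : Fin 3 → ℝ} (h0 : y 2 < y 0) (h1 : y 2 < y 1) (θ : ℝ) : 0 < Q θ y := by
  have := sin_sq_add_cos_sq θ
  rw [Q_apply]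
  rcases le_total (y 0) (y 1) with h | h
  · nlinarith [mul_nonneg (sub_nonneg.2 h) (sq_nonneg (cos θ))]
  · nlinarith [mul_nonneg (sub_nonneg.2 h) (sq_nonneg (sin θ))]

def U : Set (Fin 3 → ℝ) := {y | y 2 < y 0 ∧ y 0 < y 1}

lemma isOpen_U : IsOpen U :=
  (isOpen_lt (continuous_apply 2) (continuous_apply 0)).inter
    (isOpen_lt (continuous_apply 0) (continuous_apply 1))

lemma Q_pos_of_mem_U {y : Fin 3 → ℝ} (hy : y ∈ U) (θ : ℝ) : 0 < Q θ y :=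
  Q_pos hy.1 (hy.1.trans hy.2) θ

noncomputable def integrand (y : Fin 3 → ℝ) (θ : ℝ) : ℝ :=
  y 2 / √(Q θ y) + √(Q θ y)

lemma f2DH_eq_integral {y : Fin 3 → ℝ} (h0 : y 2 < y 0) (h1 : y 0 ≤ y 1) :
    f2DH y = ∫ θ in (0)..(π / 2), integrand y θ := by
  have hb : 0 < y 1 - y 2 := by linarith
  have hQ θ : 0 < Q θ y := Q_pos h0 (by linarith) θ
  have hz θ : 1 - √(1 - zDH y ^ 2) ^ 2 * sin θ ^ 2 = Q θ y / (y 1 - y 2) := by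
    have hz2 : zDH y ^ 2 = (y 0 - y 2) / (y 1 - y 2) := sq_sqrt (by positivity)
    rw [sq_sqrt (by rw [hz2, sub_nonneg, div_le_one hb]; linarith), hz2, Q_apply, cos_sq']
    field_simp
    ring
  have hK θ : y 2 / √(y 1 - y 2) * (1 / √(1 - √(1 - zDH y ^ 2) ^ 2 * sin θ ^ 2)) =
      y 2 / √(Q θ y) := by
    rw [hz, sqrt_div (hQ θ).le]
    field_simp
  have hE θ : √(y 1 - y 2) * √(1 - √(1 - zDH y ^ 2) ^ 2 * sin θ ^ 2) = √(Q θ y) := by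
    rw [hz, sqrt_div (hQ θ).le]
    field_simp
  have hcont : Continuous fun θ => √(Q θ y) := by fun_prop
  rw [f2DH, Kell, Eell, ← intervalIntegral.integral_const_mul,
    ← intervalIntegral.integral_const_mul]
  simp only [hK, hE]
  have hcont' : Continuous fun θ => y 2 / √(Q θ y) :=
    continuous_const.div hcont fun θ => (sqrt_pos.2 (hQ θ)).ne'
  exact (integral_add (hcont'.intervalIntegrable _ _) (hcont.intervalIntegrable _ _)).symm

noncomputable def integrandFDeriv (y : Fin 3 → ℝ) (θ : ℝ) : (Fin 3 → ℝ) →L[ℝ] ℝ :=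
  (√(Q θ y))⁻¹ • .proj 2 + ((Q θ y - y 2) / (2 * Q θ y * √(Q θ y))) • Q θ

lemma hasFDerivAt_integrand {y : Fin 3 → ℝ} {θ : ℝ} (hQ : 0 < Q θ y) :
    HasFDerivAt (integrand · θ) (integrandFDeriv y θ) y := by
  have hsqrt : HasFDerivAt (fun y => √(Q θ y)) ((1 / (2 * √(Q θ y))) • Q θ) y :=
    (Q θ).hasFDerivAt.sqrt hQ.ne'
  have hinv := (hasDerivAt_inv (sqrt_pos.2 hQ).ne').comp_hasFDerivAt y hsqrt
  have h : HasFDerivAt (fun y => y 2 * (√(Q θ y))⁻¹ + √(Q θ y)) _ y :=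
    ((hasFDerivAt_apply 2 y).mul hinv).add hsqrt
  simp only [integrand, div_eq_mul_inv]
  refine h.congr_fderiv ?_
  ext v
  have hsq := sq_sqrt hQ.le
  simp only [integrandFDeriv, add_apply, smul_apply,
    ContinuousLinearMap.proj_apply, Function.comp_apply, smul_eq_mul]
  field_simp
  rw [hsq]
  ring

lemma continuousOn_integrand : ContinuousOn (Function.uncurry integrand) (U ×ˢ univ) := by
  have hs : ∀ p ∈ U ×ˢ (univ : Set ℝ), √(Q p.2 p.1) ≠ 0 := fun p hp =>
    (sqrt_pos.2 (Q_pos_of_mem_U hp.1 p.2)).ne'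
  unfold integrand Function.uncurry
  fun_prop (disch := exact hs)

lemma continuousOn_integrandFDeriv :
    ContinuousOn (Function.uncurry integrandFDeriv) (U ×ˢ univ) := by
  have hs : ∀ p ∈ U ×ˢ (univ : Set ℝ), √(Q p.2 p.1) ≠ 0 := fun p hp =>
    (sqrt_pos.2 (Q_pos_of_mem_U hp.1 p.2)).ne'
  have hd : ∀ p ∈ U ×ˢ (univ : Set ℝ), 2 * Q p.2 p.1 * √(Q p.2 p.1) ≠ 0 := fun p hp => by
    have := Q_pos_of_mem_U hp.1 p.2
    positivity
  unfold integrandFDeriv Function.uncurry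
  fun_prop (disch := first | exact hs | exact hd)

lemma continuous_integrandFDeriv {x : Fin 3 → ℝ} (hx : x ∈ U) :
    Continuous (integrandFDeriv x) :=
  continuousOn_univ.1 (continuousOn_integrandFDeriv.uncurry_left x hx)

lemma hasFDerivAt_f2DH {x : Fin 3 → ℝ} (hx : x ∈ U) :
    HasFDerivAt f2DH (∫ θ in (0)..(π / 2), integrandFDeriv x θ) x := by
  have hU : U ∈ 𝓝 x := isOpen_U.mem_nhds hx
  refine (hasFDerivAt_intervalIntegral_of_continuousOn hU
    (continuousOn_integrand.mono (prod_mono subset_rfl (subset_univ _)))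
    (continuousOn_integrandFDeriv.mono (prod_mono subset_rfl (subset_univ _)))
    fun y hy θ _ => hasFDerivAt_integrand (Q_pos_of_mem_U hy θ)).congr_of_eventuallyEq ?_
  filter_upwards [hU] with y hy using f2DH_eq_integral hy.1 hy.2.le

noncomputable def primitive (x : Fin 3 → ℝ) (θ : ℝ) : ℝ :=
  x 2 * (x 0 - x 1) * (sin θ * cos θ) / √(Q θ x)

lemma hasDerivAt_Q_apply (x : Fin 3 → ℝ) (θ : ℝ) :
    HasDerivAt (Q · x) (2 * (x 0 - x 1) * (sin θ * cos θ)) θ := by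
  simp only [Q_apply]
  exact ((((hasDerivAt_sin θ).pow 2).const_mul (x 0 - x 2)).add
    (((hasDerivAt_cos θ).pow 2).const_mul (x 1 - x 2))).congr_deriv (by ring)

lemma hasDerivAt_primitive {x : Fin 3 → ℝ} (hx : x ∈ U) (θ : ℝ) :
    HasDerivAt (primitive x) (integrandFDeriv x θ (DH · x)) θ := by
  set k := x 2 * (x 0 - x 1)
  set q := Q θ x with hq
  have hq0 : 0 < q := Q_pos_of_mem_U hx θ
  have hr0 : 0 < √q := sqrt_pos.2 hq0
  have hrq : √q ^ 2 = q := sq_sqrt hq0.le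
  set N' := k * (cos θ ^ 2 - sin θ ^ 2)
  set q' := 2 * (x 0 - x 1) * (sin θ * cos θ)
  have hN : HasDerivAt (fun θ => k * (sin θ * cos θ)) N' θ :=
    (((hasDerivAt_sin θ).mul (hasDerivAt_cos θ)).const_mul k).congr_deriv (by ring)
  have key : 2 * q * N' - k * (sin θ * cos θ) * q' = 2 * q * DH 2 x + (q - x 2) * Q θ (DH · x) := by
    simp only [N', q', hq, Q_apply, DH, k, Matrix.cons_val_zero, Matrix.cons_val_one,
      Matrix.cons_val_two, Matrix.head_cons, Matrix.tail_cons]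
    -- The part `2 q DH₂ - x₂ Q(DH)` of the right side has degree one in `(sin²θ, cos²θ)`;
    -- homogenised by `sin²θ + cos²θ = 1`, the identity holds as polynomials.
    linear_combination (2 * ((x 0 - x 2) * sin θ ^ 2 + (x 1 - x 2) * cos θ ^ 2) *
      (x 0 * x 1 - x 2 * (x 0 + x 1)) +
      2 * x 2 * (x 1 * (x 0 - x 2) * sin θ ^ 2 + x 0 * (x 1 - x 2) * cos θ ^ 2)) *
      sin_sq_add_cos_sq θ
  refine (hN.div ((hasDerivAt_Q_apply x θ).sqrt hq0.ne') hr0.ne').congr_deriv ?_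
  calc (N' * √q - k * (sin θ * cos θ) * (q' / (2 * √q))) / √q ^ 2
      = (2 * q * N' - k * (sin θ * cos θ) * q') / (2 * q * √q) := by
        field_simp
        rw [hrq]
        ring
    _ = (2 * q * DH 2 x + (q - x 2) * Q θ (DH · x)) / (2 * q * √q) := by rw [key]
    _ = integrandFDeriv x θ (DH · x) := by
        simp only [integrandFDeriv, add_apply, smul_apply, ContinuousLinearMap.proj_apply,
          smul_eq_mul, ← hq]
        field_simp

end DarbouxHalphen

/-- On U = {x₂ > x₁ > x₃}, f₂ is differentiable and is a first integral of the
Darboux–Halphen vector field: X(f₂) = 0. -/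
theorem f2_first_integral (x : Fin 3 → ℝ) (h1 : x 1 > x 0) (h2 : x 0 > x 2) :
    DifferentiableAt ℝ f2DH x ∧ lieD DH f2DH x = 0 := by
  have hx : x ∈ DarbouxHalphen.U := ⟨h2, h1⟩
  have hF := DarbouxHalphen.hasFDerivAt_f2DH hx
  have hcont := DarbouxHalphen.continuous_integrandFDeriv hx
  refine ⟨hF.differentiableAt, ?_⟩
  rw [lieD_eq_fderiv_apply, hF.fderiv,
    ContinuousLinearMap.intervalIntegral_apply (hcont.intervalIntegrable _ _),
    integral_eq_sub_of_hasDerivAt (fun θ _ => DarbouxHalphen.hasDerivAt_primitive hx θ)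
      ((hcont.clm_apply continuous_const).intervalIntegrable _ _)]
  simp [DarbouxHalphen.primitive]
end

section
/- In ℝ⁴, fix a = (a₁, a₂, a₃, a₄) with all aⱼ ≠ 0, and let E = Σⱼ eⱼ∂ⱼ with eⱼ(x) = −xⱼ²/aⱼ. Then the rational functions I₁ = (a₁x₂ − a₂x₁)/(x₁x₂), I₂ = (a₁x₃ − a₃x₁)/(x₁x₃), I₃ = (a₁x₄ − a₄x₁)/(x₁x₄) are first integrals of E on the open set where x₁x₂x₃x₄ ≠ 0, i.e. E(Iₖ) = Σⱼ eⱼ∂ⱼIₖ = 0 for k = 1, 2, 3; moreover the gradients ∇I₁, ∇I₂, ∇I₃ are linearly independent at every point of that set. -/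
/-! Since `E (aᵢ / xᵢ) = (-xᵢ² / aᵢ) (-aᵢ / xᵢ²) = 1` for every `i`, and near any point with
nonzero coordinates `(a₁x_k − a_kx₁)/(x₁x_k) = a₁/x₁ − a_k/x_k`, each `I` is a difference of two
functions with the same `E`-derivative. The gradient of `a₁/x₁ − a_k/x_k` is
`(−a₁/x₁²) e₁ + (a_k/x_k²) e_k`, and its `e_k` component occurs in no other gradient, which gives
linear independence. -/

open Filter Topology

section PartialDerivatives

variable {n : ℕ} {f g : (Fin n → ℝ) → ℝ} {x : Fin n → ℝ}

theorem pd_congr_of_eventuallyEq (h : f =ᶠ[𝓝 x] g) (i : Fin n) : pd f i x = pd g i x := by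
  rw [pd, pd, h.fderiv_eq]

theorem pd_sub (hf : DifferentiableAt ℝ f x) (hg : DifferentiableAt ℝ g x) (i : Fin n) :
    pd (fun y => f y - g y) i x = pd f i x - pd g i x := by
  rw [pd, pd, pd, fderiv_fun_sub hf hg]
  rfl

theorem hasFDerivAt_const_div_apply (c : ℝ) (i : Fin n) (hx : x i ≠ 0) :
    HasFDerivAt (fun y : Fin n → ℝ => c / y i)
      ((-c / x i ^ 2) • ContinuousLinearMap.proj (R := ℝ) (φ := fun _ : Fin n => ℝ) i) x := by
  have hinv : HasDerivAt (fun t : ℝ => c / t) (-c / x i ^ 2) (x i) := by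
    simpa [div_eq_mul_inv, neg_div, mul_comm] using (hasDerivAt_inv hx).const_mul c
  exact hinv.comp_hasFDerivAt x (hasFDerivAt_apply i x)

theorem pd_const_div_apply (c : ℝ) (i : Fin n) (hx : x i ≠ 0) (k : Fin n) :
    pd (fun y => c / y i) k x = (Pi.single i (-c / x i ^ 2) : Fin n → ℝ) k := by
  rw [pd, (hasFDerivAt_const_div_apply c i hx).fderiv]
  simp [Pi.single_apply, eq_comm]

theorem div_mul_eventuallyEq_div_sub_div (c d : ℝ) {i j : Fin n} (hi : x i ≠ 0) (hj : x j ≠ 0) :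
    (fun y : Fin n → ℝ => (c * y j - d * y i) / (y i * y j)) =ᶠ[𝓝 x]
      fun y => c / y i - d / y j := by
  have hopen : IsOpen {y : Fin n → ℝ | y i ≠ 0 ∧ y j ≠ 0} :=
    (isOpen_ne.preimage (continuous_apply i)).inter (isOpen_ne.preimage (continuous_apply j))
  filter_upwards [hopen.mem_nhds ⟨hi, hj⟩] with y ⟨hyi, hyj⟩
  field_simp

theorem pd_div_mul_eq_single_sub_single (c d : ℝ) {i j : Fin n} (hi : x i ≠ 0) (hj : x j ≠ 0) :
    (fun k => pd (fun y => (c * y j - d * y i) / (y i * y j)) k x) =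
      (Pi.single i (-c / x i ^ 2) - Pi.single j (-d / x j ^ 2) : Fin n → ℝ) := by
  funext k
  rw [pd_congr_of_eventuallyEq (div_mul_eventuallyEq_div_sub_div c d hi hj),
    pd_sub (hasFDerivAt_const_div_apply c i hi).differentiableAt
      (hasFDerivAt_const_div_apply d j hj).differentiableAt,
    pd_const_div_apply c i hi, pd_const_div_apply d j hj, Pi.sub_apply]

end PartialDerivatives

section LieDerivative

variable {n : ℕ} {Z : Fin n → (Fin n → ℝ) → ℝ} {f g : (Fin n → ℝ) → ℝ} {x : Fin n → ℝ}

theorem lieD_congr_of_eventuallyEq (h : f =ᶠ[𝓝 x] g) : lieD Z f x = lieD Z g x := by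
  simp only [lieD, pd_congr_of_eventuallyEq h]

theorem lieD_sub (hf : DifferentiableAt ℝ f x) (hg : DifferentiableAt ℝ g x) :
    lieD Z (fun y => f y - g y) x = lieD Z f x - lieD Z g x := by
  simp only [lieD, pd_sub hf hg, mul_sub, Finset.sum_sub_distrib]

theorem lieD_const_div_apply (c : ℝ) (i : Fin n) (hx : x i ≠ 0) :
    lieD Z (fun y => c / y i) x = Z i x * (-c / x i ^ 2) := by
  simp only [lieD, pd_const_div_apply c i hx, Pi.single_apply, mul_ite, mul_zero,
    Finset.sum_ite_eq', Finset.mem_univ, if_true]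

end LieDerivative

section FirstIntegrals

variable {n : ℕ} {a : Fin n → ℝ} {x : Fin n → ℝ}

theorem lieD_const_div_apply_eq_one {i : Fin n} (hai : a i ≠ 0) (hxi : x i ≠ 0) :
    lieD (fun k y => -(y k) ^ 2 / a k) (fun y => a i / y i) x = 1 := by
  rw [lieD_const_div_apply _ i hxi]
  field_simp

theorem lieD_div_mul_eq_zero {i j : Fin n} (hai : a i ≠ 0) (haj : a j ≠ 0)
    (hxi : x i ≠ 0) (hxj : x j ≠ 0) :
    lieD (fun k y => -(y k) ^ 2 / a k) (fun y => (a i * y j - a j * y i) / (y i * y j)) x = 0 := by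
  rw [lieD_congr_of_eventuallyEq (div_mul_eventuallyEq_div_sub_div _ _ hxi hxj),
    lieD_sub (hasFDerivAt_const_div_apply _ i hxi).differentiableAt
      (hasFDerivAt_const_div_apply _ j hxj).differentiableAt,
    lieD_const_div_apply_eq_one hai hxi, lieD_const_div_apply_eq_one haj hxj, sub_self]

end FirstIntegrals

theorem linearIndependent_single_zero_sub_single_succ {n : ℕ} (α : ℝ) (β : Fin n → ℝ)
    (hβ : ∀ k, β k ≠ 0) :
    LinearIndependent ℝ
      fun k : Fin n => (Pi.single 0 α - Pi.single k.succ (β k) : Fin (n + 1) → ℝ) := by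
  rw [Fintype.linearIndependent_iff]
  intro g hg k
  simpa [Finset.sum_apply, Pi.single_apply, Fin.succ_ne_zero, hβ k] using congrFun hg k.succ

/-- In ℝ⁴ with E = Σⱼ(−xⱼ²/aⱼ)∂ⱼ (all aⱼ ≠ 0), the rational functions
I₁ = (a₁x₂ − a₂x₁)/(x₁x₂), I₂ = (a₁x₃ − a₃x₁)/(x₁x₃), I₃ = (a₁x₄ − a₄x₁)/(x₁x₄)
are first integrals of E on {x₁x₂x₃x₄ ≠ 0} with linearly independent gradients. -/
theorem first_integrals_R4 (a : Fin 4 → ℝ) (ha : ∀ j, a j ≠ 0) (x : Fin 4 → ℝ)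
    (hx : x 0 * x 1 * x 2 * x 3 ≠ 0) :
    lieD (fun j y => -(y j) ^ 2 / a j)
        (fun y => (a 0 * y 1 - a 1 * y 0) / (y 0 * y 1)) x = 0 ∧
    lieD (fun j y => -(y j) ^ 2 / a j)
        (fun y => (a 0 * y 2 - a 2 * y 0) / (y 0 * y 2)) x = 0 ∧
    lieD (fun j y => -(y j) ^ 2 / a j)
        (fun y => (a 0 * y 3 - a 3 * y 0) / (y 0 * y 3)) x = 0 ∧
    LinearIndependent ℝ
      ![fun i => pd (fun y => (a 0 * y 1 - a 1 * y 0) / (y 0 * y 1)) i x,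
        fun i => pd (fun y => (a 0 * y 2 - a 2 * y 0) / (y 0 * y 2)) i x,
        fun i => pd (fun y => (a 0 * y 3 - a 3 * y 0) / (y 0 * y 3)) i x] := by
  have hx' : ∀ i, x i ≠ 0 := fun i =>
    Finset.prod_ne_zero_iff.1 (by simpa [Fin.prod_univ_four] using hx) i (Finset.mem_univ i)
  refine ⟨lieD_div_mul_eq_zero (ha 0) (ha 1) (hx' 0) (hx' 1),
    lieD_div_mul_eq_zero (ha 0) (ha 2) (hx' 0) (hx' 2),
    lieD_div_mul_eq_zero (ha 0) (ha 3) (hx' 0) (hx' 3), ?_⟩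
  rw [pd_div_mul_eq_single_sub_single _ _ (hx' 0) (hx' 1),
    pd_div_mul_eq_single_sub_single _ _ (hx' 0) (hx' 2),
    pd_div_mul_eq_single_sub_single _ _ (hx' 0) (hx' 3)]
  convert linearIndependent_single_zero_sub_single_succ (-a 0 / x 0 ^ 2)
    (fun k : Fin 3 => -a k.succ / x k.succ ^ 2)
    (fun k => div_ne_zero (neg_ne_zero.2 (ha _)) (pow_ne_zero _ (hx' _))) using 1
  ext k : 1
  fin_cases k <;> rfl
end
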